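/- The utility-maximizing ranking function is unstable even for binary labels: for every γ there exist prediction matrices P, P' with ||P-P'||_1 arbitrarily small but ||r_opt(P) - r_opt(P')||_∞ = 1, so r_opt is not γ-stable for any finite γ. -/
import Mathlib


open Finset

/-- A `2 × 2` matrix is row-stochastic (a binary-label prediction matrix). -/
def rowStochastic (P : Fin 2 → Fin 2 → ℝ) : Prop :=
  (∀ i ℓ, 0 ≤ P i ℓ) ∧ ∀ i, ∑ ℓ, P i ℓ = 1

/-- Entrywise `1`-norm of the difference of two `2 × 2` matrices. -/
noncomputable def norm1 (P Q : Fin 2 → Fin 2 → ℝ) : ℝ :=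
  ∑ i, ∑ ℓ, |P i ℓ - Q i ℓ|

/-- Entrywise `∞`-norm of a `2 × 2` matrix. -/
noncomputable def entryMax (M : Fin 2 → Fin 2 → ℝ) : ℝ :=
  Finset.univ.sup' Finset.univ_nonempty fun p : Fin 2 × Fin 2 => |M p.1 p.2|

/-- For binary labels (`L = 2`, here with `n = 2`
individuals) and the expected-utility map `τ(p) = v₁ p₁ + v₂ p₂` with
`v₂ > v₁ ≥ 0`, the utility-maximizing ranking function `r` — which
deterministically ranks the individual of larger `τ`-value first — is
unstable: there are prediction matrices arbitrarily close in `1`-norm whose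
rankings differ by `1` in `∞`-norm, so `r` is not `γ`-stable for any `γ`. -/
theorem ropt_unstable
    (v1 v2 : ℝ) (hv1 : 0 ≤ v1) (hv : v1 < v2)
    (r : (Fin 2 → Fin 2 → ℝ) → Fin 2 → Fin 2 → ℝ)
    (hsort1 : ∀ P : Fin 2 → Fin 2 → ℝ, rowStochastic P →
      v1 * P 0 0 + v2 * P 0 1 > v1 * P 1 0 + v2 * P 1 1 →
      ∀ i k : Fin 2, r P i k = if i = k then 1 else 0)
    (hsort2 : ∀ P : Fin 2 → Fin 2 → ℝ, rowStochastic P →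
      v1 * P 1 0 + v2 * P 1 1 > v1 * P 0 0 + v2 * P 0 1 →
      ∀ i k : Fin 2, r P i k = if i ≠ k then 1 else 0) :
    (∀ ε > (0 : ℝ), ∃ P Q : Fin 2 → Fin 2 → ℝ,
        rowStochastic P ∧ rowStochastic Q ∧ norm1 P Q ≤ ε ∧
        entryMax (fun i k => r P i k - r Q i k) = 1) ∧
    ∀ γ : ℝ, ¬ (∀ P Q : Fin 2 → Fin 2 → ℝ, rowStochastic P → rowStochastic Q →
        ∀ i k : Fin 2, |r P i k - r Q i k| ≤ γ * norm1 P Q) := by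
  have key : ∀ ε > (0 : ℝ), ∃ P Q : Fin 2 → Fin 2 → ℝ,
      rowStochastic P ∧ rowStochastic Q ∧ norm1 P Q ≤ ε ∧
      (∀ i k : Fin 2, r P i k = if i = k then 1 else 0) ∧
      (∀ i k : Fin 2, r Q i k = if i ≠ k then 1 else 0) := by
    intro ε hε
    set δ : ℝ := min (ε / 8) (1 / 4) with hδdef
    have hδpos : 0 < δ := lt_min (by linarith) (by norm_num)
    have hδ4 : δ ≤ 1 / 4 := min_le_right _ _
    have hδε : δ ≤ ε / 8 := min_le_left _ _
    refine ⟨fun i k => if i = k then 1/2 - δ else 1/2 + δ,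
            fun i k => if i = k then 1/2 + δ else 1/2 - δ, ?_, ?_, ?_, ?_, ?_⟩
    · constructor
      · intro i ℓ; dsimp only; split <;> linarith
      · intro i; rw [Fin.sum_univ_two]; fin_cases i <;> simp <;> ring
    · constructor
      · intro i ℓ; dsimp only; split <;> linarith
      · intro i; rw [Fin.sum_univ_two]; fin_cases i <;> simp <;> ring
    · unfold norm1
      rw [Fin.sum_univ_two, Fin.sum_univ_two, Fin.sum_univ_two]
      simp only [Fin.zero_eta, Fin.mk_one]
      norm_num
      rw [abs_of_nonpos (by linarith), abs_of_nonneg (by linarith)]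
      linarith
    · apply hsort1 _ ⟨fun i ℓ => by split <;> linarith,
        fun i => by rw [Fin.sum_univ_two]; fin_cases i <;> simp <;> ring⟩
      simp only [show (0 : Fin 2) ≠ 1 by decide, show (1 : Fin 2) ≠ 0 by decide]
      norm_num
      nlinarith
    · apply hsort2 _ ⟨fun i ℓ => by split <;> linarith,
        fun i => by rw [Fin.sum_univ_two]; fin_cases i <;> simp <;> ring⟩
      simp only [show (0 : Fin 2) ≠ 1 by decide, show (1 : Fin 2) ≠ 0 by decide]
      norm_num
      nlinarith
  constructor
  · intro ε hε
    obtain ⟨P, Q, hP, hQ, hnorm, hrP, hrQ⟩ := key ε hε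
    refine ⟨P, Q, hP, hQ, hnorm, ?_⟩
    apply le_antisymm
    · apply Finset.sup'_le
      intro p _
      simp only
      rw [hrP, hrQ]
      fin_cases p <;> norm_num
    · apply Finset.le_sup' (f := fun p : Fin 2 × Fin 2 => |r P p.1 p.2 - r Q p.1 p.2|)
        (b := ((0 : Fin 2), (0 : Fin 2))) (Finset.mem_univ _) |>.trans_eq' ?_
      rw [hrP, hrQ]; norm_num
  · intro γ h
    obtain ⟨P, Q, hP, hQ, hnorm, hrP, hrQ⟩ := key (1 / (2 * (|γ| + 1)))
      (by positivity)
    have h00 := h P Q hP hQ 0 0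
    rw [hrP, hrQ] at h00
    simp at h00
    have habs : 0 ≤ |γ| := abs_nonneg γ
    have hn0 : 0 ≤ norm1 P Q := by
      unfold norm1
      refine Finset.sum_nonneg fun i _ => Finset.sum_nonneg fun ℓ _ => abs_nonneg _
    have : γ * norm1 P Q ≤ |γ| * (1 / (2 * (|γ| + 1))) := by
      calc γ * norm1 P Q ≤ |γ| * norm1 P Q :=
            mul_le_mul_of_nonneg_right (le_abs_self γ) hn0
        _ ≤ |γ| * (1 / (2 * (|γ| + 1))) :=
            mul_le_mul_of_nonneg_left hnorm habs
    have hlt : |γ| * (1 / (2 * (|γ| + 1))) < 1 := by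
      rw [mul_one_div, div_lt_one (by positivity)]
      linarith
    linarith
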